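/- If vec(β_{1s})ᵀ vec(β_{1t}) = 0 and vec(β_{2s})ᵀ vec(β_{2t}) = 0 for all s ≠ t, and ‖β_{1k}‖_F = ‖β_{2k}‖_F > 0 for all k ∈ [d], then the matrices {vec(β_{2k}) vec(β_{1k})ᵀ / ‖β_{1k}‖_F²}_{k=1}^d form the rank-one terms of a singular value decomposition of R(Σ_k β_{2k} ⊗ β_{1k}) with singular values σ_k = ‖β_{1k}‖_F², and rank(R(Σ_k β_{2k} ⊗ β_{1k})) = d. -/

import Mathlib

open Matrix Kronecker
namespace KPF

/-- Column-major vectorization of a matrix, indexed by (column, row). -/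
def vec {p q : ℕ} (M : Matrix (Fin p) (Fin q) ℝ) : Fin q × Fin p → ℝ :=
  fun jc => M jc.2 jc.1

/-- The Pitsianis–Van Loan rearrangement operator: rows of `R M` are the
vectorized `p1 × q1` blocks of `M`. -/
def R {p1 p2 q1 q2 : ℕ} (M : Matrix (Fin p2 × Fin p1) (Fin q2 × Fin q1) ℝ) :
    Matrix (Fin q2 × Fin p2) (Fin q1 × Fin p1) ℝ :=
  fun ji cr => M (ji.2, cr.2) (ji.1, cr.1)

/-- Frobenius norm. -/
noncomputable def frob {m n : Type*} [Fintype m] [Fintype n] (M : Matrix m n ℝ) : ℝ :=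
  Real.sqrt (∑ i, ∑ j, (M i j) ^ 2)

/-- Spectral (ℓ2 operator) norm. -/
noncomputable def spec {m n : Type*} [Fintype m] [Fintype n] [DecidableEq n]
    (A : Matrix m n ℝ) : ℝ :=
  ‖LinearMap.toContinuousLinearMap (Matrix.toEuclideanLin A)‖

/-- Singular values of a matrix, in non-increasing order. -/
noncomputable def sv {m n : ℕ} (A : Matrix (Fin m) (Fin n) ℝ) : Fin n → ℝ :=
  fun k =>
    Real.sqrt ((show (Aᵀ * A).IsHermitian by simpa using Matrix.isHermitian_conjTranspose_mul_self A).eigenvalues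
      (Tuple.sort (show (Aᵀ * A).IsHermitian by simpa using Matrix.isHermitian_conjTranspose_mul_self A).eigenvalues k.rev))

/-- Smallest singular value of a square matrix. -/
noncomputable def sMin {d : ℕ} (A : Matrix (Fin d) (Fin d) ℝ) : ℝ :=
  sInf (Set.range (sv A))

/-- sin-Θ distance between the column spans of two orthonormal matrices. -/
noncomputable def sinTheta {p d : ℕ} (W1 W2 : Matrix (Fin p) (Fin d) ℝ) : ℝ :=
  Real.sqrt (1 - (sMin (W1ᵀ * W2)) ^ 2)

/-! `R` sends `β₂ ⊗ β₁` to the rank-one matrix `vec β₂ vec β₁ᵀ`, so `A = R (∑ k, β₂ₖ ⊗ β₁ₖ)` is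
`∑ k, σₖ uₖ vₖᵀ` with `uₖ, vₖ` the vectorizations normalized by `‖β₁ₖ‖_F = ‖β₂ₖ‖_F`; these are
orthonormal by hypothesis. With `U`, `V` the matrices whose rows are the `uₖ`, `vₖ`, we have
`A = Uᵀ diag σ V`, so `rank A ≤ d`, and `U A Vᵀ = diag σ` is invertible, so `rank A ≥ d`. -/

section OrthonormalRankOne

variable {K ι m n : Type*} [Field K]

theorem dotProduct_inv_smul_eq_ite [DecidableEq ι] [Fintype m] (v : ι → m → K) (c : ι → K)
    (horth : ∀ s t, s ≠ t → v s ⬝ᵥ v t = 0) (hnorm : ∀ k, v k ⬝ᵥ v k = c k ^ 2)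
    (hc : ∀ k, c k ≠ 0) (s t : ι) :
    ((c s)⁻¹ • v s) ⬝ᵥ ((c t)⁻¹ • v t) = if s = t then 1 else 0 := by
  rw [smul_dotProduct, dotProduct_smul, smul_eq_mul, smul_eq_mul]
  split_ifs with hst
  · subst hst
    rw [hnorm]
    field_simp [hc s]
  · rw [horth s t hst, mul_zero, mul_zero]

theorem sq_smul_vecMulVec_inv_smul {c : K} (hc : c ≠ 0) (u : m → K) (w : n → K) :
    c ^ 2 • vecMulVec (c⁻¹ • u) (c⁻¹ • w) = vecMulVec u w := by
  rw [smul_vecMulVec, vecMulVec_smul, smul_smul, smul_smul,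
    show c ^ 2 * c⁻¹ * c⁻¹ = 1 by field_simp, one_smul]

theorem of_mul_of_transpose_eq_one [DecidableEq ι] [Fintype m] {u : ι → m → K}
    (hu : ∀ s t, u s ⬝ᵥ u t = if s = t then 1 else 0) :
    of u * (of u)ᵀ = 1 := by
  ext s t
  exact hu s t

theorem sum_smul_vecMulVec_eq_mul [Fintype ι] [DecidableEq ι]
    (σ : ι → K) (u : ι → m → K) (w : ι → n → K) :
    ∑ k, σ k • vecMulVec (u k) (w k) = (of u)ᵀ * diagonal σ * of w := by
  ext i j
  rw [Matrix.mul_assoc, mul_apply, Matrix.sum_apply]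
  simp only [Matrix.smul_apply, vecMulVec_apply, smul_eq_mul, diagonal_mul, transpose_apply,
    of_apply]
  exact Finset.sum_congr rfl fun k _ => by ring

theorem rank_sum_smul_vecMulVec [Fintype ι] [DecidableEq ι] [Fintype m] [Fintype n]
    (σ : ι → K) (u : ι → m → K) (w : ι → n → K)
    (hu : ∀ s t, u s ⬝ᵥ u t = if s = t then 1 else 0)
    (hw : ∀ s t, w s ⬝ᵥ w t = if s = t then 1 else 0) (hσ : ∀ k, σ k ≠ 0) :
    (∑ k, σ k • vecMulVec (u k) (w k)).rank = Fintype.card ι := by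
  set A := ∑ k, σ k • vecMulVec (u k) (w k) with hA
  rw [sum_smul_vecMulVec_eq_mul] at hA
  have hdiag : of u * A * (of w)ᵀ = diagonal σ := by
    rw [hA, ← Matrix.mul_assoc, ← Matrix.mul_assoc, of_mul_of_transpose_eq_one hu,
      Matrix.one_mul, Matrix.mul_assoc, of_mul_of_transpose_eq_one hw, Matrix.mul_one]
  have hdiag_rank : (diagonal σ).rank = Fintype.card ι :=
    rank_of_isUnit _ <| (isUnit_diagonal).2 <| Pi.isUnit_iff.2 fun k => (hσ k).isUnit
  refine le_antisymm ?_ ?_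
  · calc A.rank ≤ (of w).rank := hA ▸ rank_mul_le_right _ _
      _ ≤ Fintype.card ι := rank_le_card_height _
  · calc Fintype.card ι = (of u * A * (of w)ᵀ).rank := by rw [hdiag, hdiag_rank]
      _ ≤ (of u * A).rank := rank_mul_le_left _ _
      _ ≤ A.rank := rank_mul_le_right _ _

end OrthonormalRankOne

theorem vec_dotProduct_self {p q : ℕ} (M : Matrix (Fin p) (Fin q) ℝ) :
    vec M ⬝ᵥ vec M = frob M ^ 2 := by
  rw [frob, Real.sq_sqrt (by positivity), dotProduct, Fintype.sum_prod_type, Finset.sum_comm]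
  simp [vec, sq]

theorem R_sum {p1 p2 q1 q2 : ℕ} {ι : Type*} [Fintype ι]
    (M : ι → Matrix (Fin p2 × Fin p1) (Fin q2 × Fin q1) ℝ) :
    R (∑ k, M k) = ∑ k, R (M k) := by
  ext ji cr
  simp only [R, Matrix.sum_apply]

theorem R_kronecker {p1 p2 q1 q2 : ℕ} (B : Matrix (Fin p2) (Fin q2) ℝ)
    (A : Matrix (Fin p1) (Fin q1) ℝ) :
    R (B ⊗ₖ A) = vecMulVec (vec B) (vec A) :=
  rfl

/-- Under mutual orthogonality of the factors, the rank-one terms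
σ_k u_k v_kᵀ with u_k = vec(β_{2k})/‖β_{1k}‖_F, v_k = vec(β_{1k})/‖β_{1k}‖_F and
σ_k = ‖β_{1k}‖_F² form an SVD of R(Σ_k β_{2k} ⊗ β_{1k}), which has rank d. -/
theorem stmt7 {p1 q1 p2 q2 d : ℕ}
    (β1 : Fin d → Matrix (Fin p1) (Fin q1) ℝ)
    (β2 : Fin d → Matrix (Fin p2) (Fin q2) ℝ)
    (horth1 : ∀ s t, s ≠ t → ∑ i, vec (β1 s) i * vec (β1 t) i = 0)
    (horth2 : ∀ s t, s ≠ t → ∑ i, vec (β2 s) i * vec (β2 t) i = 0)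
    (hnorm : ∀ k, frob (β1 k) = frob (β2 k))
    (hpos : ∀ k, 0 < frob (β1 k)) :
    (∀ s t, (∑ i, ((frob (β1 s))⁻¹ • vec (β2 s)) i * ((frob (β1 t))⁻¹ • vec (β2 t)) i)
        = if s = t then 1 else 0) ∧
    (∀ s t, (∑ i, ((frob (β1 s))⁻¹ • vec (β1 s)) i * ((frob (β1 t))⁻¹ • vec (β1 t)) i)
        = if s = t then 1 else 0) ∧
    (∀ k, 0 < frob (β1 k) ^ 2) ∧
    R (∑ k, β2 k ⊗ₖ β1 k) =
      ∑ k, (frob (β1 k) ^ 2) •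
        Matrix.vecMulVec ((frob (β1 k))⁻¹ • vec (β2 k)) ((frob (β1 k))⁻¹ • vec (β1 k)) ∧
    (R (∑ k, β2 k ⊗ₖ β1 k)).rank = d := by
  have hne : ∀ k, frob (β1 k) ≠ 0 := fun k => (hpos k).ne'
  have hu := dotProduct_inv_smul_eq_ite (fun k => vec (β2 k)) (fun k => frob (β1 k)) horth2
    (fun k => by rw [vec_dotProduct_self, hnorm]) hne
  have hv := dotProduct_inv_smul_eq_ite (fun k => vec (β1 k)) (fun k => frob (β1 k)) horth1
    (fun k => vec_dotProduct_self _) hne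
  have hR : R (∑ k, β2 k ⊗ₖ β1 k) = ∑ k, (frob (β1 k) ^ 2) •
      vecMulVec ((frob (β1 k))⁻¹ • vec (β2 k)) ((frob (β1 k))⁻¹ • vec (β1 k)) := by
    simp only [R_sum, R_kronecker, sq_smul_vecMulVec_inv_smul (hne _)]
  refine ⟨hu, hv, fun k => pow_pos (hpos k) 2, hR, ?_⟩
  rw [hR, rank_sum_smul_vecMulVec _ _ _ hu hv fun k => pow_ne_zero 2 (hne k), Fintype.card_fin]

end KPF
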